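/- arXiv:2311.14022 — 9 statements merged into one kernel-verified Lean document; each statement's English description precedes it below -/
import Mathlib

section
/- Let G be a group in which every proper subgroup is contained in a maximal subgroup. Then every maximal subgroup of G is normal if and only if every generating set of G is an IG-set. -/
/-- `S` is an invariable generating set (IG-set) of `G`: for every assignment of a
conjugating element to each group element, the corresponding conjugates of the
elements of `S` generate `G`. -/
def IsIGSet {G : Type*} [Group G] (S : Set G) : Prop :=
  ∀ f : G → G, Subgroup.closure ((fun s => (f s)⁻¹ * s * f s) '' S) = ⊤

theorem every_maximal_normal_iff_every_generating_set_is_IG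
    {G : Type*} [Group G]
    (hmax : ∀ H : Subgroup G, H ≠ ⊤ → ∃ M : Subgroup G, IsCoatom M ∧ H ≤ M) :
    (∀ M : Subgroup G, IsCoatom M → M.Normal) ↔
      (∀ S : Set G, Subgroup.closure S = ⊤ → IsIGSet S) := by
  classical
  constructor
  · intro hN S hS f
    by_contra hK
    obtain ⟨M, hM, hle⟩ := hmax _ hK
    haveI hnorm : M.Normal := hN M hM
    have hSM : S ⊆ (M : Set G) := by
      intro s hs
      have h1 : (f s)⁻¹ * s * f s ∈ M :=
        hle (Subgroup.subset_closure ⟨s, hs, rfl⟩)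
      have h2 := hnorm.conj_mem _ h1 (f s)
      have : f s * ((f s)⁻¹ * s * f s) * (f s)⁻¹ = s := by group
      rwa [this] at h2
    have hle2 : (⊤ : Subgroup G) ≤ M := by
      rw [← hS]
      exact (Subgroup.closure_le M).mpr hSM
    exact hM.1 (top_le_iff.mp hle2)
  · intro hIG M hM
    constructor
    intro m hm g
    by_contra ht
    set t := g * m * g⁻¹ with htdef
    set S : Set G := (M : Set G) ∪ {t} with hSdef
    have h2 : t ∈ Subgroup.closure S := Subgroup.subset_closure (Or.inr rfl)
    have h1 : M ≤ Subgroup.closure S := by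
      intro x hx
      exact Subgroup.subset_closure (Or.inl hx)
    have hne : M ≠ Subgroup.closure S := fun he => ht (he ▸ h2)
    have hSgen : Subgroup.closure S = ⊤ := hM.2 _ (h1.lt_of_ne hne)
    have := hIG S hSgen (fun x => if x = t then g else 1)
    have himg : ((fun s => ((if s = t then g else 1))⁻¹ * s * (if s = t then g else 1)) '' S)
        ⊆ (M : Set G) := by
      rintro _ ⟨x, hx, rfl⟩
      by_cases hxt : x = t
      · subst hxt
        have : (fun s => (if s = t then g else 1)⁻¹ * s * if s = t then g else 1) t = m := by
          show (if t = t then g else 1)⁻¹ * t * (if t = t then g else 1) = m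
          rw [if_pos rfl, htdef]; group
        rw [this]; exact hm
      · simp only [if_neg hxt, inv_one, mul_one, one_mul]
        rcases hx with hx | hx
        · exact hx
        · exact absurd hx hxt
    have hle3 : (⊤ : Subgroup G) ≤ M := by
      rw [← this]
      exact (Subgroup.closure_le M).mpr himg
    exact hM.1 (top_le_iff.mp hle3)
end

section
/- Let H be a finitely generated group. Then every maximal subgroup of H is normal if and only if every finite generating set of H is an IG-set. -/
namespace Subgroup

open CompleteLattice

variable {G : Type*} [Group G]

theorem isCompactElement_closure_singleton (x : G) : IsCompactElement (closure {x}) := by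
  rw [isCompactElement_iff_le_of_directed_sSup_le]
  intro s hne hdir hle
  obtain ⟨K, hKs, hxK⟩ := (mem_sSup_of_directedOn hne hdir).1 (hle (mem_closure_singleton_self x))
  exact ⟨K, hKs, (closure_le K).2 (Set.singleton_subset_iff.2 hxK)⟩

theorem closure_finset_eq_sup (T : Finset G) :
    closure (T : Set G) = T.sup fun x => closure {x} :=
  le_antisymm
    ((closure_le _).2 fun x hx => Finset.le_sup (f := fun x => closure {x}) hx
      (mem_closure_singleton_self x))
    (Finset.sup_le fun _ hx => closure_mono (Set.singleton_subset_iff.2 hx))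

theorem isCompactElement_closure_finset (T : Finset G) :
    IsCompactElement (closure (T : Set G)) := by
  rw [closure_finset_eq_sup]
  exact isCompactElement_finsetSup T fun x _ => isCompactElement_closure_singleton x

theorem isCompactElement_top [Group.FG G] : IsCompactElement (⊤ : Subgroup G) := by
  obtain ⟨T, hT⟩ := Group.FG.out (G := G)
  exact hT ▸ isCompactElement_closure_finset T

instance [Group.FG G] : IsCoatomic (Subgroup G) :=
  coatomic_of_top_compact isCompactElement_top

theorem exists_finset_subset_closure_eq_top [Group.FG G] {S : Set G} (hS : closure S = ⊤) :
    ∃ T : Finset G, (T : Set G) ⊆ S ∧ closure (T : Set G) = ⊤ := by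
  have hS' : (⊤ : Subgroup G) ≤ ⨆ x : S, closure {(x : G)} := by
    rw [← hS, ← closure_iUnion, Set.iUnion_singleton_eq_range, Subtype.range_coe]
  obtain ⟨t, ht⟩ := isCompactElement_top.exists_finset_of_le_iSup _ _ hS'
  refine ⟨t.map (Function.Embedding.subtype _), by simp, top_le_iff.1 (ht.trans ?_)⟩
  exact iSup₂_le fun x hx => closure_mono <| Set.singleton_subset_iff.2 <|
    Finset.mem_coe.2 (Finset.mem_map_of_mem _ hx)

theorem exists_map_conj_not_le_of_not_normal {M : Subgroup G} (hM : ¬M.Normal) :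
    ∃ g : G, ¬M.map (MulAut.conj g) ≤ M := by
  by_contra! h
  exact hM ⟨fun n hn g => h g ⟨n, hn, rfl⟩⟩

end Subgroup

section

open Subgroup

variable {G : Type*} [Group G]

theorem isIGSet_of_forall_isCoatom_normal [IsCoatomic (Subgroup G)]
    (hmax : ∀ M : Subgroup G, IsCoatom M → M.Normal) {S : Set G} (hS : closure S = ⊤) :
    IsIGSet S := by
  intro f
  by_contra hne
  obtain ⟨M, hM, hle⟩ := (eq_top_or_exists_le_coatom _).resolve_left hne
  apply hM.1
  rw [eq_top_iff, ← hS, closure_le]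
  intro s hs
  have hconj := (hmax M hM).conj_mem _ (hle (subset_closure ⟨s, hs, rfl⟩)) (f s)
  simpa [mul_assoc] using hconj

theorem not_isIGSet_of_subset_union_map_conj {M : Subgroup G} (hM : M ≠ ⊤) (g : G) {S : Set G}
    (hSM : S ⊆ (M : Set G) ∪ (M.map (MulAut.conj g) : Subgroup G)) : ¬IsIGSet S := by
  classical
  intro hIG
  apply hM
  rw [eq_top_iff, ← hIG fun x => if x ∈ M then 1 else g, closure_le]
  rintro _ ⟨s, hs, rfl⟩
  by_cases hsM : s ∈ M
  · simp [hsM]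
  · obtain ⟨m, hm, rfl⟩ := (hSM hs).resolve_left hsM
    dsimp only
    rw [if_neg hsM]
    simpa [mul_assoc] using hm

theorem exists_finset_closure_eq_top_not_isIGSet [Group.FG G] {M : Subgroup G} (hM : IsCoatom M)
    (hN : ¬M.Normal) :
    ∃ T : Finset G, closure (T : Set G) = ⊤ ∧ ¬IsIGSet (T : Set G) := by
  obtain ⟨g, hg⟩ := exists_map_conj_not_le_of_not_normal hN
  have hgen : closure ((M : Set G) ∪ (M.map (MulAut.conj g) : Subgroup G)) = ⊤ := by
    rw [← sup_eq_closure]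
    exact hM.lt_iff.1 (left_lt_sup.2 hg)
  obtain ⟨T, hTM, hT⟩ := exists_finset_subset_closure_eq_top hgen
  exact ⟨T, hT, not_isIGSet_of_subset_union_map_conj hM.1 g hTM⟩

end

theorem every_maximal_normal_iff_every_finite_generating_set_is_IG
    {H : Type*} [Group H] [Group.FG H] :
    (∀ M : Subgroup H, IsCoatom M → M.Normal) ↔
      (∀ S : Finset H, Subgroup.closure (S : Set H) = ⊤ → IsIGSet (S : Set H)) := by
  refine ⟨fun hmax S hS => isIGSet_of_forall_isCoatom_normal hmax hS, fun hIG M hM => ?_⟩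
  by_contra hN
  obtain ⟨T, hT, hTIG⟩ := exists_finset_closure_eq_top_not_isIGSet hM hN
  exact hTIG (hIG T hT)
end

section
/- Let G be a nilpotent group. Then every generating set of G is an IG-set. -/
/-!
A conjugate `g⁻¹ s g` differs from `s` by the commutator `⁅s, g⁻¹⁆`, so conjugating the elements of
a generating set still yields a subgroup `H` with `H ⊔ ⁅G, G⁆ = G`. In a nilpotent group this forces
`H = G`: passing to `G ⧸ Z(G)` and inducting on the nilpotency class gives `H ⊔ Z(G) = G`, which
makes `H` normal with abelian quotient, so `⁅G, G⁆ ≤ H`.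
-/

open scoped commutatorElement

namespace Subgroup

variable {G : Type*} [Group G]

theorem normal_of_sup_center_eq_top {H : Subgroup G} (h : H ⊔ center G = ⊤) : H.Normal :=
  normalizer_eq_top_iff.mp <| top_le_iff.mp <|
    h ▸ sup_le le_normalizer (center_le_normalizer (H : Set G))

theorem commutator_le_of_sup_center_eq_top {H : Subgroup G} (h : H ⊔ center G = ⊤) :
    _root_.commutator G ≤ H :=
  haveI := normal_of_sup_center_eq_top h
  Normal.commutator_le_of_self_sup_commutative_eq_top h inferInstance

theorem map_commutator_of_surjective {G' : Type*} [Group G'] {f : G →* G'}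
    (hf : Function.Surjective f) : (_root_.commutator G).map f = _root_.commutator G' := by
  rw [_root_.commutator_def, _root_.commutator_def, map_commutator, map_top_of_surjective f hf]

theorem eq_top_of_sup_commutator_eq_top [Group.IsNilpotent G] {H : Subgroup G}
    (h : H ⊔ _root_.commutator G = ⊤) : H = ⊤ := by
  refine Group.nilpotent_center_quotient_ind
    (P := fun G _ _ => ∀ H : Subgroup G, H ⊔ _root_.commutator G = ⊤ → H = ⊤) G
    (fun _ _ _ _ _ => Subsingleton.elim _ _) (fun G _ _ ih H h => ?_) H h
  let π := QuotientGroup.mk' (center G)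
  have hπ : Function.Surjective π := QuotientGroup.mk'_surjective _
  have hmap : H.map π = ⊤ := ih _ <| by
    rw [← map_commutator_of_surjective hπ, ← map_sup, h, map_top_of_surjective π hπ]
  have hcenter : H ⊔ center G = ⊤ := by
    rw [← QuotientGroup.ker_mk' (center G), ← comap_map_eq, hmap, comap_top]
  rw [← h, sup_eq_left.mpr (commutator_le_of_sup_center_eq_top hcenter)]

theorem closure_conj_image_sup_commutator_eq_top {S : Set G} (hS : closure S = ⊤) (f : G → G) :
    closure ((fun s => (f s)⁻¹ * s * f s) '' S) ⊔ _root_.commutator G = ⊤ := by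
  rw [eq_top_iff, ← hS, closure_le]
  intro s hs
  have hconj : (f s)⁻¹ * s * f s ∈ closure ((fun s => (f s)⁻¹ * s * f s) '' S) :=
    subset_closure ⟨s, hs, rfl⟩
  have hcomm : ⁅s, (f s)⁻¹⁆ ∈ _root_.commutator G :=
    commutator_mem_commutator (mem_top s) (mem_top _)
  rw [show s = ⁅s, (f s)⁻¹⁆ * ((f s)⁻¹ * s * f s) by group]
  exact mul_mem (mem_sup_right hcomm) (mem_sup_left hconj)

end Subgroup

theorem nilpotent_every_generating_set_is_IG
    {G : Type*} [Group G] [Group.IsNilpotent G]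
    (S : Set G) (hS : Subgroup.closure S = ⊤) : IsIGSet S := fun f =>
  Subgroup.eq_top_of_sup_commutator_eq_top (Subgroup.closure_conj_image_sup_commutator_eq_top hS f)
end

section
/- Let G be a group and suppose that S ⊆ G is a generating set for G. Then S is an IG-set if and only if for every function assigning to each s ∈ S an element g_s ∈ G, the subgroup generated by the conjugates {g_s⁻¹ s g_s : s ∈ S} contains the commutator subgroup G' = [G,G]. -/
open scoped commutatorElement

theorem Subgroup.mem_of_conj_mem_of_commutator_le {G : Type*} [Group G] {H : Subgroup G}
    (hH : _root_.commutator G ≤ H) {g s : G} (hconj : g⁻¹ * s * g ∈ H) : s ∈ H := by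
  have hcomm : ⁅s, g⁻¹⁆ ∈ H :=
    hH (Subgroup.commutator_mem_commutator (Subgroup.mem_top s) (Subgroup.mem_top g⁻¹))
  have hs : s = ⁅s, g⁻¹⁆ * (g⁻¹ * s * g) := by
    simp only [commutatorElement_def]
    group
  rw [hs]
  exact H.mul_mem hcomm hconj

theorem isIGSet_iff_conjugates_contain_commutator
    {G : Type*} [Group G] (S : Set G) (hS : Subgroup.closure S = ⊤) :
    IsIGSet S ↔
      ∀ f : G → G,
        commutator G ≤ Subgroup.closure ((fun s => (f s)⁻¹ * s * f s) '' S) := by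
  refine ⟨fun hIG f => (hIG f).symm ▸ le_top, fun hcomm f => ?_⟩
  rw [eq_top_iff, ← hS, Subgroup.closure_le]
  intro s hs
  exact Subgroup.mem_of_conj_mem_of_commutator_le (hcomm f)
    (Subgroup.subset_closure ⟨s, hs, rfl⟩)
end

section
/- Let G be a group in which every maximal subgroup is normal and in which every proper subgroup is contained in a maximal subgroup, and let S ⊆ G. If S weakly generates G, then S generates G. -/
/-!
A maximal subgroup `M` that is normal contains the commutator subgroup: for `x ∉ M` we have
`M ⊔ ⟨x⟩ = G`, so `G ⧸ M` is cyclic. Hence `G'` lies in the Frattini subgroup, and weak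
generation says `⟨S⟩ ⊔ G' = G`. Since every proper subgroup lies in a maximal one, the Frattini
subgroup consists of non-generators, so `⟨S⟩ = G`.
-/

/-- `S` weakly generates `G`: the image of `S` in the abelianization generates it. -/
def WeaklyGenerates {G : Type*} [Group G] (S : Set G) : Prop :=
  Subgroup.closure ((Abelianization.of : G →* Abelianization G) '' S) = ⊤

section

variable {G : Type*} [Group G]

theorem IsCoatom.commutator_le {M : Subgroup G} (hM : IsCoatom M) [M.Normal] :
    commutator G ≤ M := by
  obtain ⟨x, hx⟩ := SetLike.exists_not_mem_of_ne_top M hM.1 rfl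
  have hsup : M ⊔ Subgroup.zpowers x = ⊤ :=
    hM.2 _ (left_lt_sup.2 (by rwa [Subgroup.zpowers_le]))
  exact Subgroup.Normal.commutator_le_of_self_sup_commutative_eq_top hsup inferInstance

theorem commutator_le_frattini (hMN : ∀ M : Subgroup G, IsCoatom M → M.Normal) :
    commutator G ≤ frattini G :=
  le_iInf₂ fun M hM => have := hMN M hM; hM.commutator_le

theorem WeaklyGenerates.closure_sup_commutator_eq_top {S : Set G} (hS : WeaklyGenerates S) :
    Subgroup.closure S ⊔ commutator G = ⊤ := by
  rw [← Abelianization.ker_of, ← Subgroup.comap_map_eq, MonoidHom.map_closure, hS,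
    Subgroup.comap_top]

end

theorem weakly_generates_implies_generates
    {G : Type*} [Group G]
    (hMN : ∀ M : Subgroup G, IsCoatom M → M.Normal)
    (hmax : ∀ H : Subgroup G, H ≠ ⊤ → ∃ M : Subgroup G, IsCoatom M ∧ H ≤ M)
    (S : Set G) (hS : WeaklyGenerates S) : Subgroup.closure S = ⊤ := by
  have : IsCoatomic (Subgroup G) := ⟨fun H => or_iff_not_imp_left.2 (hmax H)⟩
  refine frattini_nongenerating (top_le_iff.1 ?_)
  calc ⊤ = Subgroup.closure S ⊔ commutator G := hS.closure_sup_commutator_eq_top.symm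
    _ ≤ Subgroup.closure S ⊔ frattini G := sup_le_sup_left (commutator_le_frattini hMN) _
end

section
/- Let G be a group in which every proper subgroup is contained in a maximal subgroup, and suppose that some maximal subgroup of G is not normal. Then there is a subset T of G that weakly generates G but does not generate G. -/
theorem exists_weakly_generating_non_generating_set
    {G : Type*} [Group G]
    (hmax : ∀ H : Subgroup G, H ≠ ⊤ → ∃ M : Subgroup G, IsCoatom M ∧ H ≤ M)
    (hnn : ∃ M : Subgroup G, IsCoatom M ∧ ¬ M.Normal) :
    ∃ T : Set G, WeaklyGenerates T ∧ Subgroup.closure T ≠ ⊤ := by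
  obtain ⟨M, hM, hMn⟩ := hnn
  refine ⟨(M : Set G), ?_, by rw [Subgroup.closure_eq]; exact hM.1⟩
  -- commutator is not contained in M, else M would be normal
  have hcomm : ¬ commutator G ≤ M := by
    intro hle
    exact hMn ⟨fun h hh g => by
      have : g * h * g⁻¹ * h⁻¹ ∈ M := hle (Subgroup.commutator_mem_commutator
        (Subgroup.mem_top g) (Subgroup.mem_top h))
      have := mul_mem this hh
      simpa [mul_assoc] using this⟩
  have hsup : M ⊔ commutator G = ⊤ := by
    have hlt : M < M ⊔ commutator G := lt_of_le_of_ne le_sup_left (by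
      intro heq
      exact hcomm (heq ▸ le_sup_right))
    exact hM.2 _ hlt
  unfold WeaklyGenerates
  rw [← MonoidHom.map_closure, Subgroup.closure_eq]
  have hker : (Abelianization.of : G →* Abelianization G).ker = commutator G := by
    ext x
    exact QuotientGroup.eq_one_iff x
  have hsurj : Function.Surjective (Abelianization.of : G →* Abelianization G) :=
    fun y => QuotientGroup.mk_surjective y
  rw [eq_top_iff, ← Subgroup.map_top_of_surjective _ hsurj]
  rintro y ⟨g, -, rfl⟩
  have : g ∈ M ⊔ commutator G := hsup ▸ Subgroup.mem_top g
  rw [← hker, ← Subgroup.comap_map_eq] at this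
  exact this
end

section
/- Let G be a group in which every proper subgroup is contained in a maximal subgroup. Then the following are equivalent: (a) every subset S ⊆ G that weakly generates G also generates G; (b) every maximal subgroup of G is normal. -/
/-!
Weak generation of `G` by `S` means `⟨S⟩ ⊔ [G, G] = G`. A maximal subgroup is normal exactly when
it contains `[G, G]`: a normal maximal subgroup `M` has `G / M` cyclic, generated by any `g ∉ M`.
So if all maximal subgroups are normal and `⟨S⟩` were proper, a maximal subgroup containing it
would also contain `[G, G]`, contradicting weak generation. Conversely, a maximal subgroup not
containing `[G, G]` weakly generates `G` without generating it.
-/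

open Subgroup

theorem weaklyGenerates_iff_codisjoint_commutator {G : Type*} [Group G] (S : Set G) :
    WeaklyGenerates S ↔ Codisjoint (closure S) (commutator G) := by
  have hsurj : Function.Surjective (Abelianization.of : G →* Abelianization G) :=
    QuotientGroup.mk'_surjective _
  rw [WeaklyGenerates, ← MonoidHom.map_closure, ← Abelianization.ker_of, ← map_eq_range_iff,
    MonoidHom.range_eq_top.mpr hsurj]

theorem IsCoatom.commutator_le_of_normal {G : Type*} [Group G] {M : Subgroup G}
    (hM : IsCoatom M) [M.Normal] : commutator G ≤ M := by
  obtain ⟨g, -, hg⟩ := SetLike.exists_of_lt hM.lt_top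
  have hsup : M ⊔ zpowers g = ⊤ :=
    codisjoint_iff.mp (hM.not_le_iff_codisjoint.mp (by rwa [zpowers_le]))
  exact Normal.commutator_le_of_self_sup_commutative_eq_top hsup inferInstance

theorem weakly_generating_implies_generating_iff_maximal_normal
    {G : Type*} [Group G]
    (hmax : ∀ H : Subgroup G, H ≠ ⊤ → ∃ M : Subgroup G, IsCoatom M ∧ H ≤ M) :
    (∀ S : Set G, WeaklyGenerates S → Subgroup.closure S = ⊤) ↔
      (∀ M : Subgroup G, IsCoatom M → M.Normal) := by
  constructor
  · intro h M hM
    apply Normal.of_commutator_le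
    by_contra hC
    have hM_weak : WeaklyGenerates (M : Set G) := by
      rw [weaklyGenerates_iff_codisjoint_commutator, closure_eq]
      exact hM.not_le_iff_codisjoint.mp hC
    exact hM.ne_top (by simpa using h M hM_weak)
  · intro h S hS
    by_contra hS_proper
    obtain ⟨M, hM, hSM⟩ := hmax _ hS_proper
    have : M.Normal := h M hM
    have hcod : Codisjoint M M :=
      ((weaklyGenerates_iff_codisjoint_commutator S).mp hS).mono hSM hM.commutator_le_of_normal
    exact hM.ne_top (codisjoint_self.mp hcod)
end

section
/- Let G be a group in which every maximal subgroup is normal, with d(G) = 2, and suppose G/G' is isomorphic to ℤ × ℤ. Then Δ(G) is connected but has infinite diameter: any two non-isolated vertices of Γ(G) are joined by a path in Δ(G), and for every natural number n there exist non-isolated vertices whose distance in Δ(G) exceeds n. -/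
/-- The generating graph of a group `G`: vertices are group elements, with distinct
nontrivial `x, y` adjacent iff they generate `G` (the identity is isolated). -/
def genGraph (G : Type*) [Group G] : SimpleGraph G where
  Adj x y := x ≠ y ∧ x ≠ 1 ∧ y ≠ 1 ∧ Subgroup.closure ({x, y} : Set G) = ⊤
  symm := ⟨by
    rintro x y ⟨hxy, hx, hy, h⟩
    exact ⟨hxy.symm, hy, hx, by rwa [Set.pair_comm]⟩⟩
  loopless := ⟨fun x h => h.1 rfl⟩

/-- The set of non-isolated vertices of the generating graph. -/
def nonIso (G : Type*) [Group G] : Set G := {v | ∃ w, (genGraph G).Adj v w}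

/-- `Δ(G)`: the induced subgraph of the generating graph on its non-isolated vertices. -/
def deltaGraph (G : Type*) [Group G] : SimpleGraph (nonIso G) :=
  (genGraph G).induce (nonIso G)

namespace DeltaAux

open Subgroup
open scoped commutatorElement

/-! ### Integer 2×2 determinant machinery -/

/-- Determinant of two integer vectors. -/
def dd (x y : ℤ × ℤ) : ℤ := x.1 * y.2 - x.2 * y.1

lemma dd_skew (x y : ℤ × ℤ) : dd y x = - dd x y := by
  simp only [dd]; ring

lemma plucker (u v w z : ℤ × ℤ) :
    dd u w * dd v z - dd u z * dd v w = dd u v * dd w z := by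
  simp only [dd]; ring

/-- Two adjacent (unimodular pair) vertices cannot lie strictly on opposite sides
of a unimodular edge `(A, B)`. -/
lemma crossing {A B w z : ℤ × ℤ}
    (hAB : dd A B = 1 ∨ dd A B = -1) (hwz : dd w z = 1 ∨ dd w z = -1)
    (h1 : dd A w * dd B w < 0) (h2 : 0 < dd A z * dd B z) : False := by
  have hp := plucker A B w z
  set a := dd A w with ha
  set b := dd B w with hb
  set c := dd A z with hc
  set d := dd B z with hd
  have h4 : (a * d) * (c * b) = (a * b) * (c * d) := by ring
  have h5 : (a * d) * (c * b) < 0 := by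
    have := mul_neg_of_neg_of_pos h1 h2
    linarith [h4]
  have h6 : a * d - c * b = 1 ∨ a * d - c * b = -1 := by
    rcases hAB with h | h <;> rcases hwz with h' | h' <;> rw [h, h'] at hp
    · left; linarith
    · right; linarith
    · right; linarith
    · left; linarith
  rcases h6 with h | h <;> nlinarith [sq_nonneg (a * d + c * b)]

lemma collinear {x x' y : ℤ × ℤ} (h1 : dd x y = 0) (h2 : dd x' y = 0) (hy : y ≠ 0) :
    dd x x' = 0 := by
  have e1 : dd x x' * y.1 = dd x y * x'.1 - dd x' y * x.1 := by simp only [dd]; ring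
  have e2 : dd x x' * y.2 = dd x y * x'.2 - dd x' y * x.2 := by simp only [dd]; ring
  rw [h1, h2] at e1 e2
  simp only [zero_mul, sub_zero, zero_sub, neg_zero, sub_self] at e1 e2
  have hy' : y.1 ≠ 0 ∨ y.2 ≠ 0 := by
    by_contra hcon
    push_neg at hcon
    exact hy (Prod.ext hcon.1 hcon.2)
  rcases hy' with h | h
  · exact (mul_eq_zero.mp e1).resolve_right h
  · exact (mul_eq_zero.mp e2).resolve_right h

/-! ### Fibonacci vectors -/

/-- Fibonacci numbers as integers. -/
def F (n : ℕ) : ℤ := (Nat.fib n : ℤ)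

lemma F_rec (n : ℕ) : F (n + 2) = F (n + 1) + F n := by
  unfold F
  have := Nat.fib_add_two (n := n)
  push_cast [this]
  ring

lemma F_pos (n : ℕ) : 0 < F (n + 1) := by
  unfold F
  exact_mod_cast Nat.fib_pos.mpr n.succ_pos

lemma cassini : ∀ a : ℕ, F a * F (a + 2) - F (a + 1) * F (a + 1) = (-1) ^ (a + 1)
  | 0 => by norm_num [F]
  | (a + 1) => by
    have ih := cassini a
    have h2 := F_rec a
    have h3 := F_rec (a + 1)
    have hp : (-1 : ℤ) ^ (a + 2) = -(-1 : ℤ) ^ (a + 1) := by rw [pow_succ]; ring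
    show F (a + 1) * F (a + 3) - F (a + 2) * F (a + 2) = (-1) ^ (a + 2)
    rw [hp]
    linear_combination (-1 : ℤ) * ih + F (a + 1) * h3 + (- F (a + 2)) * h2

lemma detFib : ∀ k a : ℕ, F a * F (a + k + 1) - F (a + 1) * F (a + k) = (-1) ^ (a + 1) * F k
  | 0, a => by
    show F a * F (a + 1) - F (a + 1) * F a = (-1) ^ (a + 1) * F 0
    rw [show F 0 = 0 from rfl, mul_zero]
    ring
  | 1, a => by
    have := cassini a
    show F a * F (a + 2) - F (a + 1) * F (a + 1) = (-1) ^ (a + 1) * F 1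
    rw [show F 1 = 1 from rfl, mul_one]
    exact this
  | (k + 2), a => by
    have i1 : F a * F (a + k + 2) - F (a + 1) * F (a + k + 1) = (-1) ^ (a + 1) * F (k + 1) :=
      detFib (k + 1) a
    have i2 := detFib k a
    have h1 := F_rec k
    have h2 : F (a + k + 3) = F (a + k + 2) + F (a + k + 1) := F_rec (a + k + 1)
    have h3 : F (a + k + 2) = F (a + k + 1) + F (a + k) := F_rec (a + k)
    show F a * F (a + k + 3) - F (a + 1) * F (a + k + 2) = (-1) ^ (a + 1) * F (k + 2)
    linear_combination i1 + i2 - ((-1 : ℤ) ^ (a + 1)) * h1 + F a * h2 - F (a + 1) * h3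

/-- The Fibonacci vectors. -/
def V (i : ℕ) : ℤ × ℤ := (F i, F (i + 1))

lemma dd_V (a k : ℕ) : dd (V a) (V (a + k)) = (-1) ^ (a + 1) * F k := by
  show F a * F (a + k + 1) - F (a + 1) * F (a + k) = _
  exact detFib k a

lemma dd_V_succ (a : ℕ) : dd (V a) (V (a + 1)) = 1 ∨ dd (V a) (V (a + 1)) = -1 := by
  have h := dd_V a 1
  have hF1 : F 1 = 1 := by norm_num [F]
  rw [hF1, mul_one] at h
  rcases neg_one_pow_eq_or ℤ (a + 1) with h' | h' <;> rw [h'] at h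
  · exact Or.inl h
  · exact Or.inr h

lemma dd_V_ne {i j : ℕ} (h : i ≠ j) : dd (V i) (V j) ≠ 0 := by
  have key : ∀ i j : ℕ, i < j → dd (V i) (V j) ≠ 0 := by
    intro i j hij
    have hj : j = i + ((j - i - 1) + 1) := by omega
    rw [hj, dd_V]
    have hF := F_pos (j - i - 1)
    rcases neg_one_pow_eq_or ℤ (i + 1) with h' | h' <;> rw [h'] <;> intro hcon <;> nlinarith
  rcases lt_or_gt_of_ne h with hij | hij
  · exact key i j hij
  · intro hcon
    have := key j i hij
    rw [dd_skew] at this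
    exact this (by rw [hcon]; ring)

/-! ### Generation in `Multiplicative (ℤ × ℤ)` -/

lemma closure_top_iff_det (u v : Multiplicative (ℤ × ℤ)) :
    Subgroup.closure ({u, v} : Set (Multiplicative (ℤ × ℤ))) = ⊤ ↔
      (dd u.toAdd v.toAdd = 1 ∨ dd u.toAdd v.toAdd = -1) := by
  constructor
  · intro h
    have h1 : Multiplicative.ofAdd ((1, 0) : ℤ × ℤ) ∈ Subgroup.closure ({u, v} :
        Set (Multiplicative (ℤ × ℤ))) := h ▸ Subgroup.mem_top _
    have h2 : Multiplicative.ofAdd ((0, 1) : ℤ × ℤ) ∈ Subgroup.closure ({u, v} :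
        Set (Multiplicative (ℤ × ℤ))) := h ▸ Subgroup.mem_top _
    rw [Subgroup.mem_closure_pair] at h1 h2
    obtain ⟨m, n, hmn⟩ := h1
    obtain ⟨p, q, hpq⟩ := h2
    have e1 := congrArg Multiplicative.toAdd hmn
    have e2 := congrArg Multiplicative.toAdd hpq
    simp only [toAdd_mul, toAdd_zpow, toAdd_ofAdd, Prod.ext_iff, Prod.fst_add, Prod.snd_add,
      Prod.smul_fst, Prod.smul_snd, smul_eq_mul] at e1 e2
    obtain ⟨e11, e12⟩ := e1
    obtain ⟨e21, e22⟩ := e2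
    have key : (dd u.toAdd v.toAdd) * (m * q - n * p) = 1 := by
      simp only [dd]
      linear_combination (p * (Multiplicative.toAdd u).2 + q * (Multiplicative.toAdd v).2) * e11
        - (p * (Multiplicative.toAdd u).1 + q * (Multiplicative.toAdd v).1) * e12 + e22
    exact Int.isUnit_iff.mp (IsUnit.of_mul_eq_one _ key)
  · intro h
    have hD : dd u.toAdd v.toAdd * dd u.toAdd v.toAdd = 1 := by
      rcases h with h | h <;> rw [h] <;> norm_num
    rw [eq_top_iff]
    rintro z -
    rw [Subgroup.mem_closure_pair]
    set a := u.toAdd with ha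
    set b := v.toAdd with hb
    set c := z.toAdd with hc
    have hD' : (a.1 * b.2 - a.2 * b.1) * (a.1 * b.2 - a.2 * b.1) = 1 := hD
    refine ⟨(a.1 * b.2 - a.2 * b.1) * (c.1 * b.2 - c.2 * b.1),
      (a.1 * b.2 - a.2 * b.1) * (a.1 * c.2 - a.2 * c.1), ?_⟩
    apply Multiplicative.toAdd.injective
    simp only [toAdd_mul, toAdd_zpow, Prod.ext_iff, Prod.fst_add, Prod.snd_add,
      Prod.smul_fst, Prod.smul_snd, smul_eq_mul, ← ha, ← hb, ← hc]
    constructor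
    · linear_combination c.1 * hD'
    · linear_combination c.2 * hD'

/-! ### Group-theoretic reduction -/

variable {G : Type*} [Group G]

lemma exists_coatom_ge (h2 : ∃ x y : G, Subgroup.closure ({x, y} : Set G) = ⊤)
    {H : Subgroup G} (hH : H ≠ ⊤) : ∃ M : Subgroup G, IsCoatom M ∧ H ≤ M := by
  obtain ⟨x, y, hxy⟩ := h2
  have hcond : ∀ c ⊆ {K : Subgroup G | K ≠ ⊤}, IsChain (· ≤ ·) c → ∀ z ∈ c,
      ∃ ub ∈ {K : Subgroup G | K ≠ ⊤}, ∀ k ∈ c, k ≤ ub := by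
    intro c hc hchain z hz
    refine ⟨sSup c, ?_, fun k hk => le_sSup hk⟩
    intro htop
    have hxm : x ∈ sSup c := htop ▸ Subgroup.mem_top x
    have hym : y ∈ sSup c := htop ▸ Subgroup.mem_top y
    rw [Subgroup.mem_sSup_of_directedOn ⟨z, hz⟩ hchain.directedOn] at hxm hym
    obtain ⟨K1, hK1, hxK1⟩ := hxm
    obtain ⟨K2, hK2, hyK2⟩ := hym
    rcases hchain.total hK1 hK2 with hle | hle
    · apply hc hK2
      rw [eq_top_iff, ← hxy, Subgroup.closure_le]
      rintro g (rfl | rfl)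
      · exact hle hxK1
      · exact hyK2
    · apply hc hK1
      rw [eq_top_iff, ← hxy, Subgroup.closure_le]
      rintro g (rfl | rfl)
      · exact hxK1
      · exact hle hyK2
  obtain ⟨m, hm, hmax⟩ := zorn_le_nonempty₀ {K : Subgroup G | K ≠ ⊤} hcond H hH
  refine ⟨m, ⟨hmax.prop, ?_⟩, hm⟩
  intro b hb
  by_contra hbt
  exact hb.2 (hmax.2 hbt hb.1)

lemma coatom_commutator (hMN : ∀ M : Subgroup G, IsCoatom M → M.Normal)
    {M : Subgroup G} (hM : IsCoatom M) (g h : G) : ⁅g, h⁆ ∈ M := by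
  haveI := hMN M hM
  have hsub : ∀ K : Subgroup (G ⧸ M), K = ⊥ ∨ K = ⊤ := by
    intro K
    have hker : M ≤ K.comap (QuotientGroup.mk' M) := by
      intro m hm
      have h1 : (QuotientGroup.mk' M) m = 1 := (QuotientGroup.eq_one_iff m).mpr hm
      simp only [Subgroup.mem_comap, h1]
      exact K.one_mem
    have hKmap := Subgroup.map_comap_eq_self_of_surjective (QuotientGroup.mk'_surjective M) K
    rcases eq_or_lt_of_le hker with heq | hlt
    · left
      rw [← hKmap, ← heq, eq_bot_iff]
      rintro q hq
      obtain ⟨m, hm, rfl⟩ := hq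
      simp only [Subgroup.mem_bot]
      exact (QuotientGroup.eq_one_iff m).mpr hm
    · right
      have htop : K.comap (QuotientGroup.mk' M) = ⊤ := hM.2 _ hlt
      rw [← hKmap, htop]
      exact Subgroup.map_top_of_surjective _ (QuotientGroup.mk'_surjective M)
  have hcomm : ∀ a b : G ⧸ M, Commute a b := by
    intro a b
    rcases eq_or_ne a 1 with rfl | ha
    · exact Commute.one_left b
    rcases hsub (Subgroup.zpowers a) with hz | hz
    · exact absurd (Subgroup.zpowers_eq_bot.mp hz) ha
    · have hb : b ∈ Subgroup.zpowers a := hz ▸ Subgroup.mem_top b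
      obtain ⟨k, rfl⟩ := hb
      exact (Commute.refl a).zpow_right k
  have hone : (QuotientGroup.mk' M) ⁅g, h⁆ = 1 := by
    rw [map_commutatorElement]
    exact commutatorElement_eq_one_iff_commute.mpr (hcomm _ _)
  exact (QuotientGroup.eq_one_iff _).mp hone

lemma gen_iff (hMN : ∀ M : Subgroup G, IsCoatom M → M.Normal)
    (h2 : ∃ x y : G, Subgroup.closure ({x, y} : Set G) = ⊤)
    (φ : G →* Multiplicative (ℤ × ℤ)) (hs : Function.Surjective φ)
    (hk : ∀ g : G, φ g = 1 → g ∈ commutator G) (x y : G) :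
    Subgroup.closure ({x, y} : Set G) = ⊤ ↔
      Subgroup.closure ({φ x, φ y} : Set (Multiplicative (ℤ × ℤ))) = ⊤ := by
  constructor
  · intro h
    rw [← Set.image_pair, ← MonoidHom.map_closure, h]
    exact Subgroup.map_top_of_surjective φ hs
  · intro h
    by_contra hne
    obtain ⟨M, hM, hle⟩ := exists_coatom_ge h2 hne
    have hcomm_le : commutator G ≤ M := by
      rw [_root_.commutator_def]
      exact Subgroup.commutator_le.mpr fun g _ h _ => coatom_commutator hMN hM g h
    have htop : (⊤ : Subgroup G) = Subgroup.closure ({x, y} : Set G) ⊔ φ.ker := by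
      rw [← Subgroup.comap_map_eq, MonoidHom.map_closure, Set.image_pair, h, Subgroup.comap_top]
    have : (⊤ : Subgroup G) ≤ M := by
      rw [htop]
      refine sup_le hle fun g hg => ?_
      exact hcomm_le (hk g hg)
    exact hM.1 (top_le_iff.mp this)

/-! ### Sign-change along walks -/

lemma walk_zero {V' : Type*} (Γ : SimpleGraph V') (g : V' → ℤ × ℤ)
    (hadj : ∀ {x y : V'}, Γ.Adj x y → (dd (g x) (g y) = 1 ∨ dd (g x) (g y) = -1))
    (A B : ℤ × ℤ) (hAB : dd A B = 1 ∨ dd A B = -1) :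
    ∀ {u v : V'} (p : Γ.Walk u v), 0 < dd A (g u) * dd B (g u) →
      dd A (g v) * dd B (g v) < 0 →
      ∃ w ∈ p.support, dd A (g w) * dd B (g w) = 0 := by
  intro u v p
  induction p with
  | nil =>
    intro h1 h2
    linarith
  | @cons u w v h p ih =>
    intro h1 h2
    rcases lt_trichotomy (dd A (g w) * dd B (g w)) 0 with hw | hw | hw
    · exact absurd (crossing hAB (hadj h.symm) hw h1) id
    · exact ⟨w, by simp [SimpleGraph.Walk.support_cons, p.start_mem_support], hw⟩
    · obtain ⟨w', hw', hz⟩ := ih hw h2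
      exact ⟨w', by simp [SimpleGraph.Walk.support_cons, hw'], hz⟩

end DeltaAux

open DeltaAux

theorem delta_connected_infinite_diameter_of_abelianization_int_int
    {G : Type*} [Group G]
    (hMN : ∀ M : Subgroup G, IsCoatom M → M.Normal)
    (h2 : ∃ x y : G, Subgroup.closure ({x, y} : Set G) = ⊤)
    (hnc : ¬ ∃ x : G, Subgroup.closure ({x} : Set G) = ⊤)
    (hab : Nonempty (Abelianization G ≃* Multiplicative (ℤ × ℤ))) :
    (∀ u v : nonIso G, (deltaGraph G).Reachable u v) ∧
      (∀ n : ℕ, ∃ u v : nonIso G, n < (deltaGraph G).dist u v) := by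
  classical
  obtain ⟨e⟩ := hab
  set φ : G →* Multiplicative (ℤ × ℤ) := e.toMonoidHom.comp Abelianization.of with hφ
  have hof : Function.Surjective (Abelianization.of : G →* Abelianization G) :=
    fun q => QuotientGroup.induction_on q fun g => ⟨g, rfl⟩
  have hs : Function.Surjective φ := e.surjective.comp hof
  have hk : ∀ g : G, φ g = 1 → g ∈ commutator G := by
    intro g hg
    have h1 : Abelianization.of g = 1 := by
      apply e.injective
      simpa [hφ] using hg
    exact (QuotientGroup.eq_one_iff g).mp h1
  set ψ : G → ℤ × ℤ := fun g => Multiplicative.toAdd (φ g) with hψ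
  -- adjacency characterization
  have adj_iff : ∀ x y : G, (genGraph G).Adj x y ↔
      (dd (ψ x) (ψ y) = 1 ∨ dd (ψ x) (ψ y) = -1) := by
    intro x y
    have hgen := gen_iff hMN h2 φ hs hk x y
    have hdet := closure_top_iff_det (φ x) (φ y)
    constructor
    · intro hadj
      obtain ⟨_, _, _, h⟩ := (show x ≠ y ∧ x ≠ 1 ∧ y ≠ 1 ∧ Subgroup.closure ({x, y} : Set G) = ⊤ from hadj)
      exact hdet.mp (hgen.mp h)
    · intro h
      have htop : Subgroup.closure ({x, y} : Set G) = ⊤ := hgen.mpr (hdet.mpr h)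
      refine (show x ≠ y ∧ x ≠ 1 ∧ y ≠ 1 ∧ Subgroup.closure ({x, y} : Set G) = ⊤ from ⟨?_, ?_, ?_, htop⟩)
      · rintro rfl
        rw [Set.pair_eq_singleton] at htop
        exact hnc ⟨x, htop⟩
      · rintro rfl
        rw [← Set.singleton_union, Subgroup.closure_union, Subgroup.closure_singleton_one,
          bot_sup_eq] at htop
        exact hnc ⟨y, htop⟩
      · rintro rfl
        rw [Set.pair_comm, ← Set.singleton_union, Subgroup.closure_union,
          Subgroup.closure_singleton_one, bot_sup_eq] at htop
        exact hnc ⟨x, htop⟩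
  have lift : ∀ v : ℤ × ℤ, ∃ g : G, ψ g = v := by
    intro v
    obtain ⟨g, hg⟩ := hs (Multiplicative.ofAdd v)
    exact ⟨g, by simp [hψ, hg]⟩
  have mem_nonIso : ∀ (g : G) (v : ℤ × ℤ),
      (dd (ψ g) v = 1 ∨ dd (ψ g) v = -1) → g ∈ nonIso G := by
    intro g v hv
    obtain ⟨h, hh⟩ := lift v
    exact ⟨h, (adj_iff g h).mpr (by rwa [hh])⟩
  have psi_ne : ∀ u : nonIso G, ψ u.1 ≠ 0 := by
    rintro ⟨g, w, hadj⟩ h0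
    have hd := (adj_iff g w).mp hadj
    have : ψ g = 0 := h0
    rw [this] at hd
    simp [dd] at hd
  have delta_adj : ∀ (u v : nonIso G),
      (dd (ψ u.1) (ψ v.1) = 1 ∨ dd (ψ u.1) (ψ v.1) = -1) → (deltaGraph G).Adj u v := by
    intro u v h
    exact (adj_iff u.1 v.1).mpr h
  -- base vertex
  obtain ⟨x₁, hx₁⟩ := lift (1, 0)
  have hx₁m : x₁ ∈ nonIso G := mem_nonIso x₁ (0, 1) (by left; simp [dd, hx₁])
  -- connectivity
  have reach : ∀ (n : ℕ) (u : nonIso G), (ψ u.1).2.natAbs ≤ n →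
      (deltaGraph G).Reachable u ⟨x₁, hx₁m⟩ := by
    intro n
    induction n using Nat.strong_induction_on with
    | _ n ih =>
    intro u hu
    set a := (ψ u.1).1 with ha
    set b := (ψ u.1).2 with hb
    obtain ⟨w, hadjw⟩ := u.2
    have hdet := (adj_iff u.1 w).mp hadjw
    have hbez : ∃ p q : ℤ, p * a + q * b = 1 := by
      rcases hdet with h | h
      · exact ⟨(ψ w).2, -(ψ w).1, by simp only [dd] at h; linear_combination h⟩
      · exact ⟨-(ψ w).2, (ψ w).1, by simp only [dd] at h; linear_combination -h⟩
    obtain ⟨p, q, hpq⟩ := hbez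
    by_cases hb0 : b = 0
    · -- second coordinate zero: a = ±1
      have hpa : a * p = 1 := by rw [hb0] at hpq; linear_combination hpq
      have ha1 : a = 1 ∨ a = -1 := Int.isUnit_iff.mp (IsUnit.of_mul_eq_one _ hpa)
      obtain ⟨y, hy⟩ := lift (0, 1)
      have hym : y ∈ nonIso G := mem_nonIso y (1, 0) (by right; simp [dd, hy])
      have hadj1 : (deltaGraph G).Adj u ⟨y, hym⟩ := by
        apply delta_adj
        rw [hy]
        rcases ha1 with h | h
        · left; simp [dd, ← ha, ← hb, hb0, h]
        · right; simp [dd, ← ha, ← hb, hb0, h]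
      have hadj2 : (deltaGraph G).Adj (⟨y, hym⟩ : nonIso G) ⟨x₁, hx₁m⟩ := by
        apply delta_adj
        rw [hy, hx₁]
        right; simp [dd]
      exact hadj1.reachable.trans hadj2.reachable
    · by_cases hb1 : b.natAbs = 1
      · have hbpm : b = 1 ∨ b = -1 := by
          rcases Int.natAbs_eq_iff.mp hb1 with h | h
          · exact Or.inl (by exact_mod_cast h)
          · exact Or.inr (by exact_mod_cast h)
        have hadj1 : (deltaGraph G).Adj u ⟨x₁, hx₁m⟩ := by
          apply delta_adj
          rw [hx₁]
          rcases hbpm with h | h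
          · right; simp [dd, ← ha, ← hb, h]
          · left; simp [dd, ← ha, ← hb, h]
        exact hadj1.reachable
      · -- |b| ≥ 2 : Euclidean step
        have hb2 : 2 ≤ b.natAbs := by omega
        set m : ℤ := (b.natAbs : ℤ) with hm
        have hm0 : 0 < m := by
          rw [hm]
          exact_mod_cast Nat.pos_of_ne_zero (by omega)
        obtain ⟨r, hr⟩ : ∃ r : ℤ, r = p % m := ⟨_, rfl⟩
        have hr0 : 0 ≤ r := hr ▸ Int.emod_nonneg p (ne_of_gt hm0)
        have hrm : r < m := hr ▸ Int.emod_lt_of_pos p hm0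
        have hrdef : r = p - m * (p / m) := by rw [hr, Int.emod_def]
        have hmb : m = b ∨ m = -b := by
          rcases Int.natAbs_eq b with h | h
          · left; omega
          · right; omega
        have key : ∃ c : ℤ, a * r - b * c = 1 := by
          rcases hmb with h | h
          · refine ⟨-q - a * (p / m), ?_⟩
            rw [hrdef, h]
            linear_combination hpq
          · refine ⟨-q + a * (p / m), ?_⟩
            rw [hrdef, h]
            linear_combination hpq
        obtain ⟨c, hc⟩ := key
        have hrne : r ≠ 0 := by
          intro hr00
          rw [hr00] at hc
          have hb' : b * (-c) = 1 := by linear_combination hc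
          have h1 : b.natAbs * (-c).natAbs = 1 := by
            rw [← Int.natAbs_mul, hb']
            rfl
          have h2 : b.natAbs ∣ 1 := ⟨(-c).natAbs, h1.symm⟩
          have h3 := Nat.le_of_dvd one_pos h2
          omega
        obtain ⟨y, hy⟩ := lift (c, r)
        have hym : y ∈ nonIso G := by
          apply mem_nonIso y (ψ u.1)
          rw [hy]
          right
          show c * (ψ u.1).2 - r * (ψ u.1).1 = -1
          rw [← ha, ← hb]
          linear_combination -hc
        have hadj1 : (deltaGraph G).Adj u ⟨y, hym⟩ := by
          apply delta_adj
          rw [hy]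
          left
          show (ψ u.1).1 * r - (ψ u.1).2 * c = 1
          rw [← ha, ← hb]
          linear_combination hc
        have hlt : r.natAbs < n := by
          have h1 : r.natAbs < b.natAbs := by omega
          omega
        have hrec := ih r.natAbs hlt ⟨y, hym⟩ (by rw [hy])
        exact hadj1.reachable.trans hrec
  have hconn : ∀ u v : nonIso G, (deltaGraph G).Reachable u v := by
    intro u v
    exact (reach _ u le_rfl).trans (reach _ v le_rfl).symm
  refine ⟨hconn, ?_⟩
  -- infinite diameter
  intro n
  set N := 2 * n + 6 with hN
  obtain ⟨s0, hs0⟩ := lift (1, 0)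
  obtain ⟨t0, ht0⟩ := lift (V N)
  have hs0m : s0 ∈ nonIso G := mem_nonIso s0 (0, 1) (by left; simp [dd, hs0])
  have ht0m : t0 ∈ nonIso G := by
    apply mem_nonIso t0 (V (N + 1))
    rw [ht0]
    exact dd_V_succ N
  refine ⟨⟨s0, hs0m⟩, ⟨t0, ht0m⟩, ?_⟩
  by_contra hle
  push_neg at hle
  obtain ⟨pth, hpl⟩ :=
    (hconn ⟨s0, hs0m⟩ ⟨t0, ht0m⟩).exists_walk_length_eq_dist
  have hplen : pth.length ≤ n := by rw [hpl]; exact hle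
  -- for each of n+2 separating Fibonacci edges, find a vertex on one of its lines
  have hzero : ∀ a : Fin (n + 2), ∃ w : nonIso G, w ∈ pth.support ∧
      dd (V (2 * (a : ℕ) + 1)) (ψ w.1) * dd (V (2 * (a : ℕ) + 2)) (ψ w.1) = 0 := by
    intro a
    set i := 2 * (a : ℕ) + 1 with hi
    have hAB : dd (V i) (V (i + 1)) = 1 ∨ dd (V i) (V (i + 1)) = -1 := dd_V_succ i
    have hadjd : ∀ {x y : nonIso G}, (deltaGraph G).Adj x y →
        (dd (ψ x.1) (ψ y.1) = 1 ∨ dd (ψ x.1) (ψ y.1) = -1) := by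
      intro x y h
      exact (adj_iff x.1 y.1).mp h
    have hstart : 0 < dd (V i) (ψ s0) * dd (V (i + 1)) (ψ s0) := by
      rw [hs0]
      show 0 < (F i * 0 - F (i + 1) * 1) * (F (i + 1) * 0 - F (i + 2) * 1)
      have h1 := F_pos i
      have h2 := F_pos (i + 1)
      nlinarith
    have hend : dd (V i) (ψ t0) * dd (V (i + 1)) (ψ t0) < 0 := by
      rw [ht0]
      set k := N - i - 1 with hk
      have hk2 : 2 ≤ k := by omega
      have hk1 : i + (k + 1) = N := by omega
      have hk2' : (i + 1) + k = N := by omega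
      have e1 := dd_V i (k + 1)
      rw [hk1] at e1
      have e2 := dd_V (i + 1) k
      rw [hk2'] at e2
      rw [e1, e2]
      have hp2 : (-1 : ℤ) ^ (i + 1 + 1) = -((-1 : ℤ) ^ (i + 1)) := by rw [pow_succ]; ring
      rw [hp2]
      have hFk : 0 < F k := by
        have := F_pos (k - 1)
        rwa [show k - 1 + 1 = k by omega] at this
      have hFk1 : 0 < F (k + 1) := F_pos k
      rcases neg_one_pow_eq_or ℤ (i + 1) with h | h <;> rw [h] <;> nlinarith
    have := walk_zero (deltaGraph G) (fun w => ψ w.1) hadjd (V i) (V (i + 1)) hAB pth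
      hstart hend
    obtain ⟨w, hw, hwz⟩ := this
    exact ⟨w, hw, by rw [show 2 * (a : ℕ) + 2 = i + 1 by omega]; exact hwz⟩
  choose f hfs hfz using hzero
  have hinj : Function.Injective f := by
    intro a b hab'
    by_contra hne
    have hza := hfz a
    have hzb := hfz b
    rw [hab'] at hza
    set w := f b with hwdef
    have hwne : ψ w.1 ≠ 0 := psi_ne w
    have habne : (a : ℕ) ≠ (b : ℕ) := fun h => hne (Fin.ext h)
    rcases mul_eq_zero.mp hza with z1 | z1 <;> rcases mul_eq_zero.mp hzb with z2 | z2
    · exact dd_V_ne (i := 2 * (a : ℕ) + 1) (j := 2 * (b : ℕ) + 1) (by omega)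
        (collinear z1 z2 hwne)
    · exact dd_V_ne (i := 2 * (a : ℕ) + 1) (j := 2 * (b : ℕ) + 2) (by omega)
        (collinear z1 z2 hwne)
    · exact dd_V_ne (i := 2 * (a : ℕ) + 2) (j := 2 * (b : ℕ) + 1) (by omega)
        (collinear z1 z2 hwne)
    · exact dd_V_ne (i := 2 * (a : ℕ) + 2) (j := 2 * (b : ℕ) + 2) (by omega)
        (collinear z1 z2 hwne)
  have hcard : (Finset.univ : Finset (Fin (n + 2))).card ≤ pth.support.toFinset.card := by
    apply Finset.card_le_card_of_injOn f
    · intro a _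
      exact List.mem_toFinset.mpr (hfs a)
    · intro a _ b _ h
      exact hinj h
  have hcard2 := List.toFinset_card_le pth.support
  rw [SimpleGraph.Walk.length_support] at hcard2
  simp only [Finset.card_univ, Fintype.card_fin] at hcard
  omega
end

section
/- Let G be a group in which every maximal subgroup is normal, with d(G) = 2, and suppose G/G' is isomorphic neither to ℤ × ℤ nor to C₂ × C₂. Then Δ(G) has diameter 2: any two non-isolated vertices of Γ(G) are at distance at most 2 in Δ(G), and there exist two distinct non-isolated vertices that are not adjacent. -/
/-! ### Number-theoretic core lemma -/

private lemma exists_coprime_lin (d e : ℤ) (k : ℕ) (hk : k ≠ 0)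
    (h : ∀ p : ℕ, p.Prime → (p : ℤ) ∣ d → (p : ℤ) ∣ e → ¬ (p ∣ k)) :
    ∃ j : ℤ, IsCoprime (j * d + e) (k : ℤ) := by
  classical
  set J : ℕ := ∏ q ∈ k.primeFactors.filter (fun q : ℕ => ¬ (q : ℤ) ∣ e), q with hJ
  refine ⟨(J : ℤ), ?_⟩
  rw [Int.isCoprime_iff_gcd_eq_one]
  by_contra hg
  obtain ⟨p, hp, hpg⟩ := Nat.exists_prime_and_dvd hg
  have hgk : (Int.gcd ((J : ℤ) * d + e) (k : ℤ) : ℤ) ∣ (k : ℤ) := Int.gcd_dvd_right _ _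
  have hpk : p ∣ k := by
    have : (p : ℤ) ∣ (k : ℤ) := dvd_trans (Int.natCast_dvd_natCast.mpr hpg) hgk
    exact_mod_cast this
  have hpl : (p : ℤ) ∣ (J : ℤ) * d + e :=
    dvd_trans (Int.natCast_dvd_natCast.mpr hpg) (Int.gcd_dvd_left _ _)
  by_cases hpe : (p : ℤ) ∣ e
  · have hpd : ¬ (p : ℤ) ∣ d := fun hd => h p hp hd hpe hpk
    have hpJd : (p : ℤ) ∣ (J : ℤ) * d := by
      have := dvd_sub hpl hpe
      have h2 : (J : ℤ) * d + e - e = (J : ℤ) * d := by ring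
      rwa [h2] at this
    rcases ((Nat.prime_iff_prime_int.mp hp).dvd_mul.mp hpJd) with hJ' | hd'
    · have hpJ : p ∣ J := by exact_mod_cast hJ'
      have hcop : p.Coprime J := by
        apply Nat.Coprime.prod_right
        intro q hq
        simp only [Finset.mem_filter, Nat.mem_primeFactors] at hq
        have hq' : q.Prime := hq.1.1
        refine (Nat.coprime_primes hp hq').mpr ?_
        rintro rfl
        exact hq.2 hpe
      exact hp.one_lt.ne' (hcop.eq_one_of_dvd hpJ)
    · exact hpd hd'
  · have hpJ : p ∣ J := Finset.dvd_prod_of_mem _ (by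
      simp only [Finset.mem_filter, Nat.mem_primeFactors]
      exact ⟨⟨hp, hpk, hk⟩, hpe⟩)
    have : (p : ℤ) ∣ e := by
      have h1 : (p : ℤ) ∣ (J : ℤ) * d := Dvd.dvd.mul_right (Int.natCast_dvd_natCast.mpr hpJ) d
      have h2 := dvd_sub hpl h1
      have h3 : (J : ℤ) * d + e - (J : ℤ) * d = e := by ring
      rwa [h3] at h2
    exact hpe this

/-! ### General group helpers -/

section GeneralGroup

variable {K : Type*} [Group K]

private lemma closure_pair_eq_sup (x y : K) :
    Subgroup.closure ({x, y} : Set K) = Subgroup.zpowers x ⊔ Subgroup.zpowers y := by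
  rw [Set.insert_eq, Subgroup.closure_union, ← Subgroup.zpowers_eq_closure,
    ← Subgroup.zpowers_eq_closure]

private lemma closure_pair_inv (x y : K) :
    Subgroup.closure ({x⁻¹, y} : Set K) = Subgroup.closure ({x, y} : Set K) := by
  rw [closure_pair_eq_sup, closure_pair_eq_sup, Subgroup.zpowers_inv]

private lemma closure_pair_map_top' {B : Type*} [Group B] (f : K →* B)
    (hf : Function.Surjective f) (x y : K) (h : Subgroup.closure ({x, y} : Set K) = ⊤) :
    Subgroup.closure ({f x, f y} : Set B) = ⊤ := by
  rw [← Set.image_pair, ← MonoidHom.map_closure, h, ← MonoidHom.range_eq_map]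
  exact f.range_eq_top_of_surjective hf

private lemma pow_mod_two {M : Type*} [Monoid M] (x : M) (hx : x * x = 1) (n : ℕ) :
    x ^ (n % 2) = x ^ n := by
  have h2 : x ^ 2 = 1 := by rw [pow_two, hx]
  conv_rhs => rw [← Nat.div_add_mod n 2]
  rw [pow_add, pow_mul, h2, one_pow, one_mul]

private lemma exists_coatom_ge (x0 y0 : K)
    (hgen : Subgroup.closure ({x0, y0} : Set K) = ⊤) {H : Subgroup K} (hH : H ≠ ⊤) :
    ∃ M : Subgroup K, IsCoatom M ∧ H ≤ M := by
  have key : ∀ c ⊆ {L : Subgroup K | L ≠ ⊤}, IsChain (· ≤ ·) c → ∀ y ∈ c,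
      ∃ ub ∈ {L : Subgroup K | L ≠ ⊤}, ∀ z ∈ c, z ≤ ub := by
    intro c hcs hchain y hy
    have hne : Nonempty c := ⟨⟨y, hy⟩⟩
    have hdir : Directed (· ≤ ·) (fun L : c => (L : Subgroup K)) :=
      directedOn_iff_directed.mp hchain.directedOn
    refine ⟨⨆ L : c, (L : Subgroup K), ?_, ?_⟩
    · intro htop
      have hx0 : x0 ∈ ⨆ L : c, (L : Subgroup K) := htop ▸ Subgroup.mem_top x0
      have hy0 : y0 ∈ ⨆ L : c, (L : Subgroup K) := htop ▸ Subgroup.mem_top y0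
      obtain ⟨i, hi⟩ := (Subgroup.mem_iSup_of_directed hdir).mp hx0
      obtain ⟨j, hj⟩ := (Subgroup.mem_iSup_of_directed hdir).mp hy0
      obtain ⟨l, hil, hjl⟩ := hdir i j
      have : Subgroup.closure ({x0, y0} : Set K) ≤ (l : Subgroup K) := by
        rw [Subgroup.closure_le]
        rintro x (rfl | rfl)
        · exact hil hi
        · exact hjl hj
      rw [hgen] at this
      exact (hcs l.2) (le_antisymm le_top this)
    · intro L hL
      exact le_iSup (fun L : c => (L : Subgroup K)) ⟨L, hL⟩
  obtain ⟨M, hHM, hMmem, hMmax⟩ := zorn_le_nonempty₀ {L : Subgroup K | L ≠ ⊤} key H hH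
  refine ⟨M, ⟨hMmem, ?_⟩, hHM⟩
  intro L hML
  by_contra hLt
  exact hML.not_ge (hMmax hLt hML.le)

open scoped commutatorElement in
private lemma commutator_le_coatom {M : Subgroup K} (hM : IsCoatom M) (hMn : M.Normal) :
    commutator K ≤ M := by
  obtain ⟨z, hz⟩ : ∃ z : K, z ∉ M := by
    by_contra h
    push_neg at h
    exact hM.1 (Subgroup.eq_top_iff' M |>.mpr h)
  set ψ : K →* K ⧸ M := QuotientGroup.mk' M with hψ
  have hsup : M ⊔ Subgroup.zpowers z = ⊤ := by
    apply hM.2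
    exact left_lt_sup.mpr (fun hle => hz (hle (Subgroup.mem_zpowers z)))
  have htop : Subgroup.zpowers (ψ z) = ⊤ := by
    rw [eq_top_iff]
    intro q _
    obtain ⟨g, rfl⟩ := QuotientGroup.mk'_surjective M q
    have hg : g ∈ M ⊔ Subgroup.zpowers z := hsup ▸ Subgroup.mem_top g
    have hcomap : M ⊔ Subgroup.zpowers z ≤ Subgroup.comap ψ (Subgroup.zpowers (ψ z)) := by
      apply sup_le
      · intro m hm
        have : ψ m = 1 := (QuotientGroup.eq_one_iff m).mpr hm
        simp only [Subgroup.mem_comap, this]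
        exact Subgroup.one_mem _
      · intro w hw
        obtain ⟨n, hn⟩ := Subgroup.mem_zpowers_iff.mp hw
        simp only [Subgroup.mem_comap, ← hn, map_zpow]
        exact Subgroup.zpow_mem _ (Subgroup.mem_zpowers _) n
    exact hcomap hg
  rw [commutator_def, Subgroup.commutator_le]
  intro g _ h _
  have hcomm : ψ g * ψ h = ψ h * ψ g := by
    obtain ⟨i, hi⟩ := Subgroup.mem_zpowers_iff.mp (htop ▸ Subgroup.mem_top (ψ g))
    obtain ⟨j, hj⟩ := Subgroup.mem_zpowers_iff.mp (htop ▸ Subgroup.mem_top (ψ h))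
    rw [← hi, ← hj, ← zpow_add, ← zpow_add, add_comm]
  have : ψ ⁅g, h⁆ = 1 := by
    rw [map_commutatorElement]
    exact commutatorElement_eq_one_iff_mul_comm.mpr hcomm
  exact (QuotientGroup.eq_one_iff _).mp this

private lemma ker_abelianization_of :
    (Abelianization.of : K →* Abelianization K).ker = commutator K := by
  ext x
  exact QuotientGroup.eq_one_iff x

private lemma abelianization_of_surjective :
    Function.Surjective (Abelianization.of : K →* Abelianization K) :=
  fun q => QuotientGroup.mk'_surjective (commutator K) q

/-- Transfer of generation through the abelianization, under normality of coatoms. -/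
private lemma closure_pair_abelianization
    (hMN : ∀ M : Subgroup K, IsCoatom M → M.Normal)
    (x0 y0 : K) (hgen : Subgroup.closure ({x0, y0} : Set K) = ⊤) (x y : K) :
    Subgroup.closure ({x, y} : Set K) = ⊤ ↔
      Subgroup.closure ({Abelianization.of x, Abelianization.of y} :
        Set (Abelianization K)) = ⊤ := by
  constructor
  · exact closure_pair_map_top' _ abelianization_of_surjective x y
  · intro h
    by_contra hne
    obtain ⟨M, hM, hHM⟩ := exists_coatom_ge x0 y0 hgen hne
    have hcomm : commutator K ≤ M := commutator_le_coatom hM (hMN M hM)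
    have hxM : x ∈ M := hHM (Subgroup.subset_closure (Set.mem_insert _ _))
    have hyM : y ∈ M := hHM (Subgroup.subset_closure (Set.mem_insert_of_mem _ rfl))
    have hle : Subgroup.closure ({Abelianization.of x, Abelianization.of y} :
        Set (Abelianization K)) ≤ M.map Abelianization.of := by
      rw [Subgroup.closure_le]
      rintro w (rfl | rfl)
      · exact ⟨x, hxM, rfl⟩
      · exact ⟨y, hyM, rfl⟩
    rw [h] at hle
    have : Subgroup.comap (Abelianization.of : K →* Abelianization K)
        (M.map Abelianization.of) = M := by
      rw [Subgroup.comap_map_eq, ker_abelianization_of, sup_of_le_left hcomm]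
    have hMtop : M = ⊤ := by
      rw [← this, eq_top_iff]
      intro g _
      exact hle (Subgroup.mem_top _)
    exact hM.1 hMtop

end GeneralGroup

/-! ### Common neighbours in an abelian group -/

section AbelianSide

variable {A : Type*} [CommGroup A]

/-- generation by `x, c` is equivalent to the image of `c` generating `A ⧸ ⟨x⟩`. -/
private lemma closure_pair_iff (x c : A) :
    Subgroup.closure ({x, c} : Set A) = ⊤ ↔
      Subgroup.zpowers ((QuotientGroup.mk' (Subgroup.zpowers x)) c) = ⊤ := by
  set f := QuotientGroup.mk' (Subgroup.zpowers x) with hf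
  constructor
  · intro h
    have h2 : Subgroup.closure ({f x, f c} : Set (A ⧸ Subgroup.zpowers x)) = ⊤ :=
      closure_pair_map_top' f (QuotientGroup.mk'_surjective _) x c h
    have hx1 : f x = 1 := (QuotientGroup.eq_one_iff x).mpr (Subgroup.mem_zpowers x)
    rw [hx1] at h2
    rw [Set.insert_eq, Subgroup.closure_union, Subgroup.closure_singleton_one, bot_sup_eq] at h2
    exact (Subgroup.zpowers_eq_closure (f c)).trans h2
  · intro h
    rw [eq_top_iff]
    intro g _
    have hg : f g ∈ Subgroup.zpowers (f c) := by rw [h]; trivial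
    obtain ⟨n, hn⟩ := Subgroup.mem_zpowers_iff.mp hg
    have h1 : f (g * (c ^ n)⁻¹) = 1 := by
      rw [map_mul, map_inv, map_zpow, hn, mul_inv_cancel]
    have h2 : g * (c ^ n)⁻¹ ∈ Subgroup.zpowers x := (QuotientGroup.eq_one_iff _).mp h1
    have hxm : x ∈ Subgroup.closure ({x, c} : Set A) :=
      Subgroup.subset_closure (Set.mem_insert _ _)
    have hcm : c ∈ Subgroup.closure ({x, c} : Set A) :=
      Subgroup.subset_closure (Set.mem_insert_of_mem _ rfl)
    have h3 : g * (c ^ n)⁻¹ ∈ Subgroup.closure ({x, c} : Set A) := by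
      have : Subgroup.zpowers x ≤ Subgroup.closure ({x, c} : Set A) :=
        (Subgroup.zpowers_le).mpr hxm
      exact this h2
    have : g = (g * (c ^ n)⁻¹) * c ^ n := by group
    rw [this]
    exact Subgroup.mul_mem _ h3 (Subgroup.zpow_mem _ hcm n)

private lemma common_neighbor_finite (a s b t : A)
    (ha : Subgroup.closure ({a, s} : Set A) = ⊤) (hb : Subgroup.closure ({b, t} : Set A) = ⊤)
    (hfin : Nat.card (A ⧸ Subgroup.zpowers b) ≠ 0) :
    ∃ c, Subgroup.closure ({a, c} : Set A) = ⊤ ∧ Subgroup.closure ({b, c} : Set A) = ⊤ := by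
  set Q := A ⧸ Subgroup.zpowers b with hQ
  set f : A →* Q := QuotientGroup.mk' (Subgroup.zpowers b) with hf
  have hfs : Function.Surjective f := QuotientGroup.mk'_surjective _
  set tb : Q := f t with htbdef
  have htb : Subgroup.zpowers tb = ⊤ := (closure_pair_iff b t).mp hb
  have : Finite Q := Nat.finite_of_card_ne_zero hfin
  set k : ℕ := Nat.card Q with hk
  have hord : orderOf tb = k := by
    rw [← Nat.card_zpowers, htb, hk]
    exact Subgroup.card_top
  have hka : tb ^ (k : ℤ) = 1 := by
    rw [zpow_natCast, ← hord, pow_orderOf_eq_one]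
  obtain ⟨A', hA'⟩ := Subgroup.mem_zpowers_iff.mp (htb ▸ Subgroup.mem_top (f a))
  obtain ⟨B', hB'⟩ := Subgroup.mem_zpowers_iff.mp (htb ▸ Subgroup.mem_top (f s))
  have hyp : ∀ p : ℕ, p.Prime → (p : ℤ) ∣ A' → (p : ℤ) ∣ B' → ¬ (p ∣ k) := by
    intro p hp hpA hpB hpk
    have htop : Subgroup.closure ({f a, f s} : Set Q) = ⊤ := closure_pair_map_top' f hfs a s ha
    have hmem : tb ∈ Subgroup.closure ({f a, f s} : Set Q) := htop ▸ Subgroup.mem_top tb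
    rw [Set.insert_eq, Subgroup.closure_union, ← Subgroup.zpowers_eq_closure,
      ← Subgroup.zpowers_eq_closure] at hmem
    obtain ⟨y, hy, z, hz, hyz⟩ := Subgroup.mem_sup.mp hmem
    obtain ⟨m, hm⟩ := Subgroup.mem_zpowers_iff.mp hy
    obtain ⟨n, hn⟩ := Subgroup.mem_zpowers_iff.mp hz
    have h1 : tb ^ (A' * m + B' * n) = tb := by
      rw [zpow_add, zpow_mul, zpow_mul, hA', hB', hm, hn, hyz]
    have h2 : tb ^ (A' * m + B' * n - 1) = 1 := by
      rw [zpow_sub, h1, zpow_one, mul_inv_cancel]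
    have h3 : (k : ℤ) ∣ A' * m + B' * n - 1 := by
      rw [← hord]
      exact orderOf_dvd_iff_zpow_eq_one.mpr h2
    have h4 : (p : ℤ) ∣ 1 := by
      have hp1 : (p : ℤ) ∣ A' * m + B' * n - 1 :=
        dvd_trans (Int.natCast_dvd_natCast.mpr hpk) h3
      have hp2 : (p : ℤ) ∣ A' * m + B' * n := dvd_add (hpA.mul_right m) (hpB.mul_right n)
      have := dvd_sub hp2 hp1
      have he : A' * m + B' * n - (A' * m + B' * n - 1) = 1 := by ring
      rwa [he] at this
    have h6 := Int.le_of_dvd one_pos h4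
    have h7 := hp.two_le
    have : ((2 : ℕ) : ℤ) ≤ (p : ℤ) := by exact_mod_cast h7
    omega
  obtain ⟨j, hj⟩ := exists_coprime_lin A' B' k hfin hyp
  refine ⟨a ^ j * s, ?_, ?_⟩
  · rw [closure_pair_iff]
    set g : A →* A ⧸ Subgroup.zpowers a := QuotientGroup.mk' (Subgroup.zpowers a) with hg
    have hga : g a = 1 := (QuotientGroup.eq_one_iff a).mpr (Subgroup.mem_zpowers a)
    have : g (a ^ j * s) = g s := by rw [map_mul, map_zpow, hga, one_zpow, one_mul]
    rw [this]
    exact (closure_pair_iff a s).mp ha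
  · rw [closure_pair_iff]
    have hfc : f (a ^ j * s) = tb ^ (j * A' + B') := by
      rw [map_mul, map_zpow, ← hA', ← hB', ← zpow_mul, ← zpow_add, mul_comm A' j]
    rw [hfc]
    obtain ⟨u, v, huv⟩ := hj
    have h5 : tb = (tb ^ (j * A' + B')) ^ u * (tb ^ (k : ℤ)) ^ v := by
      rw [← zpow_mul, ← zpow_mul, ← zpow_add,
        show (j * A' + B') * u + (k : ℤ) * v = u * (j * A' + B') + v * k by ring, huv, zpow_one]
    rw [hka, one_zpow, mul_one] at h5
    apply le_antisymm le_top
    rw [← htb]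
    apply (Subgroup.zpowers_le).mpr
    exact Subgroup.mem_zpowers_iff.mpr ⟨u, h5.symm⟩

/-- order of the generator of the whole group equals the cardinality. -/
private lemma orderOf_gen_eq_card {Q : Type*} [Group Q] {g : Q}
    (h : Subgroup.zpowers g = ⊤) : orderOf g = Nat.card Q := by
  rw [← Nat.card_zpowers, h]
  exact Subgroup.card_top

private lemma iso_ZZ_of_inf (a s : A)
    (ha : Subgroup.closure ({a, s} : Set A) = ⊤)
    (hQ : Nat.card (A ⧸ Subgroup.zpowers a) = 0)
    (hoa : orderOf a = 0) :
    Nonempty (A ≃* Multiplicative (ℤ × ℤ)) := by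
  set f : A →* A ⧸ Subgroup.zpowers a := QuotientGroup.mk' (Subgroup.zpowers a) with hf
  have hs : Subgroup.zpowers (f s) = ⊤ := (closure_pair_iff a s).mp ha
  have hos : orderOf (f s) = 0 := by rw [orderOf_gen_eq_card hs, hQ]
  set φ : Multiplicative (ℤ × ℤ) →* A :=
    MonoidHom.mk' (fun p => a ^ (p.toAdd.1) * s ^ (p.toAdd.2)) (by
      intro p q
      show a ^ (p.toAdd.1 + q.toAdd.1) * s ^ (p.toAdd.2 + q.toAdd.2) = _
      rw [zpow_add, zpow_add]
      exact mul_mul_mul_comm _ _ _ _) with hφ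
  have hsurj : Function.Surjective φ := by
    have hr : (⊤ : Subgroup A) ≤ φ.range := by
      rw [← ha, Subgroup.closure_le]
      rintro x (rfl | rfl)
      · exact ⟨Multiplicative.ofAdd (1, 0), by simp [hφ]⟩
      · exact ⟨Multiplicative.ofAdd (0, 1), by simp [hφ]⟩
    intro x
    exact hr (Subgroup.mem_top x)
  have hinj : Function.Injective φ := by
    apply (injective_iff_map_eq_one φ).mpr
    intro p hp
    have hp' : a ^ (p.toAdd.1) * s ^ (p.toAdd.2) = 1 := hp
    have h1 : f s ^ (p.toAdd.2) = 1 := by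
      have := congrArg f hp'
      have hfa : f a = 1 := (QuotientGroup.eq_one_iff a).mpr (Subgroup.mem_zpowers a)
      rw [map_mul, map_zpow, map_zpow, map_one, hfa, one_zpow, one_mul] at this
      exact this
    have h2 : p.toAdd.2 = 0 := by
      have := orderOf_dvd_iff_zpow_eq_one.mpr h1
      rwa [hos, Nat.cast_zero, zero_dvd_iff] at this
    have h3 : a ^ (p.toAdd.1) = 1 := by
      rw [h2, zpow_zero, mul_one] at hp'; exact hp'
    have h4 : p.toAdd.1 = 0 := by
      have := orderOf_dvd_iff_zpow_eq_one.mpr h3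
      rwa [hoa, Nat.cast_zero, zero_dvd_iff] at this
    have : p.toAdd = 0 := Prod.ext h4 h2
    exact Multiplicative.toAdd.injective this
  exact ⟨(MulEquiv.ofBijective φ ⟨hinj, hsurj⟩).symm⟩

private lemma mem_zpowers_of_finite_order (a s b : A)
    (ha : Subgroup.closure ({a, s} : Set A) = ⊤)
    (hQ : Nat.card (A ⧸ Subgroup.zpowers a) = 0)
    (hob : orderOf b ≠ 0) :
    b ∈ Subgroup.zpowers a := by
  set f : A →* A ⧸ Subgroup.zpowers a := QuotientGroup.mk' (Subgroup.zpowers a) with hf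
  have hs : Subgroup.zpowers (f s) = ⊤ := (closure_pair_iff a s).mp ha
  have hos : orderOf (f s) = 0 := by rw [orderOf_gen_eq_card hs, hQ]
  obtain ⟨Kx, hK⟩ := Subgroup.mem_zpowers_iff.mp (hs ▸ Subgroup.mem_top (f b))
  have h1 : (f b) ^ (orderOf b : ℤ) = 1 := by
    rw [zpow_natCast, ← map_pow, pow_orderOf_eq_one, map_one]
  have h2 : (f s) ^ (Kx * (orderOf b : ℤ)) = 1 := by
    rw [zpow_mul, hK, h1]
  have h3 : Kx * (orderOf b : ℤ) = 0 := by
    have := orderOf_dvd_iff_zpow_eq_one.mpr h2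
    rwa [hos, Nat.cast_zero, zero_dvd_iff] at this
  have h4 : Kx = 0 := by
    rcases mul_eq_zero.mp h3 with h | h
    · exact h
    · exact absurd (by exact_mod_cast h) hob
  have : f b = 1 := by rw [← hK, h4, zpow_zero]
  exact (QuotientGroup.eq_one_iff b).mp this

private lemma common_neighbor (a s b t : A)
    (ha : Subgroup.closure ({a, s} : Set A) = ⊤) (hb : Subgroup.closure ({b, t} : Set A) = ⊤)
    (hZZ : ¬ Nonempty (A ≃* Multiplicative (ℤ × ℤ))) :
    ∃ c, Subgroup.closure ({a, c} : Set A) = ⊤ ∧ Subgroup.closure ({b, c} : Set A) = ⊤ := by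
  by_cases h1 : Nat.card (A ⧸ Subgroup.zpowers b) ≠ 0
  · exact common_neighbor_finite a s b t ha hb h1
  by_cases h2 : Nat.card (A ⧸ Subgroup.zpowers a) ≠ 0
  · obtain ⟨c, hc1, hc2⟩ := common_neighbor_finite b t a s hb ha h2
    exact ⟨c, hc2, hc1⟩
  push_neg at h1 h2
  by_cases hoa : orderOf a = 0
  · exact absurd (iso_ZZ_of_inf a s ha h2 hoa) hZZ
  by_cases hob : orderOf b = 0
  · exact absurd (iso_ZZ_of_inf b t hb h1 hob) hZZ
  have hab : a ∈ Subgroup.zpowers b := mem_zpowers_of_finite_order b t a hb h1 hoa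
  refine ⟨s, ha, ?_⟩
  rw [eq_top_iff, ← ha, Subgroup.closure_le]
  rintro x (rfl | rfl)
  · have hle : Subgroup.zpowers b ≤ Subgroup.closure ({b, s} : Set A) := by
      rw [Subgroup.zpowers_le]
      exact Subgroup.subset_closure (Set.mem_insert _ _)
    exact hle hab
  · exact Subgroup.subset_closure (Set.mem_insert_of_mem _ rfl)

end AbelianSide

theorem delta_diameter_two
    {G : Type*} [Group G]
    (hMN : ∀ M : Subgroup G, IsCoatom M → M.Normal)
    (h2 : ∃ x y : G, Subgroup.closure ({x, y} : Set G) = ⊤)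
    (hnc : ¬ ∃ x : G, Subgroup.closure ({x} : Set G) = ⊤)
    (hab1 : ¬ Nonempty (Abelianization G ≃* Multiplicative (ℤ × ℤ)))
    (hab2 : ¬ Nonempty (Abelianization G ≃* Multiplicative (ZMod 2 × ZMod 2))) :
    (∀ u v : nonIso G, (deltaGraph G).Reachable u v ∧ (deltaGraph G).dist u v ≤ 2) ∧
      (∃ u v : nonIso G, u ≠ v ∧ ¬ (deltaGraph G).Adj u v) := by
  classical
  obtain ⟨x0, y0, hgen⟩ := h2
  set π : G →* Abelianization G := Abelianization.of with hπ
  have htrans : ∀ x y : G, Subgroup.closure ({x, y} : Set G) = ⊤ ↔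
      Subgroup.closure ({π x, π y} : Set (Abelianization G)) = ⊤ :=
    closure_pair_abelianization hMN x0 y0 hgen
  have hAnc : ∀ α : Abelianization G, Subgroup.zpowers α ≠ ⊤ := by
    intro α hα
    obtain ⟨x, rfl⟩ := abelianization_of_surjective α
    have hx : Subgroup.closure ({π x, π x} : Set (Abelianization G)) = ⊤ := by
      rw [Set.pair_eq_singleton, ← Subgroup.zpowers_eq_closure]; exact hα
    have := (htrans x x).mpr hx
    rw [Set.pair_eq_singleton] at this
    exact hnc ⟨x, this⟩
  have hne1 : ∀ {α β : Abelianization G},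
      Subgroup.closure ({α, β} : Set (Abelianization G)) = ⊤ → α ≠ β ∧ α ≠ 1 ∧ β ≠ 1 := by
    intro α β h
    refine ⟨?_, ?_, ?_⟩
    · rintro rfl
      rw [Set.pair_eq_singleton, ← Subgroup.zpowers_eq_closure] at h
      exact hAnc _ h
    · rintro rfl
      rw [closure_pair_eq_sup, Subgroup.zpowers_one_eq_bot, bot_sup_eq] at h
      exact hAnc _ h
    · rintro rfl
      rw [closure_pair_eq_sup, Subgroup.zpowers_one_eq_bot, sup_bot_eq] at h
      exact hAnc _ h
  have hmem : ∀ x : G, x ∈ nonIso G ↔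
      ∃ β, Subgroup.closure ({π x, β} : Set (Abelianization G)) = ⊤ := by
    intro x
    constructor
    · rintro ⟨w, hadj⟩
      exact ⟨π w, (htrans x w).mp hadj.2.2.2⟩
    · rintro ⟨β, hβ⟩
      obtain ⟨y, rfl⟩ := abelianization_of_surjective β
      obtain ⟨hne, hα1, hβ1⟩ := hne1 hβ
      refine ⟨y, ?_, ?_, ?_, (htrans x y).mpr hβ⟩
      · rintro rfl; exact hne rfl
      · rintro rfl; exact hα1 (map_one π)
      · rintro rfl; exact hβ1 (map_one π)
  constructor
  · -- distance at most two
    rintro ⟨u, hu⟩ ⟨v, hv⟩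
    obtain ⟨βu, hβu⟩ := (hmem u).mp hu
    obtain ⟨βv, hβv⟩ := (hmem v).mp hv
    obtain ⟨γ, hγu, hγv⟩ := common_neighbor (π u) βu (π v) βv hβu hβv hab1
    obtain ⟨w, rfl⟩ := abelianization_of_surjective γ
    have hw_mem : w ∈ nonIso G := (hmem w).mpr ⟨π u, by rwa [Set.pair_comm]⟩
    obtain ⟨huw, hu1, hw1⟩ := hne1 hγu
    obtain ⟨hvw, hv1, _⟩ := hne1 hγv
    have hadj1 : (genGraph G).Adj u w :=
      ⟨fun h => huw (congrArg π h), fun h => hu1 (by rw [h, map_one]),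
        fun h => hw1 (by rw [h, map_one]), (htrans u w).mpr hγu⟩
    have hadj2 : (genGraph G).Adj w v :=
      ⟨fun h => hvw (congrArg π h).symm, fun h => hw1 (by rw [h, map_one]),
        fun h => hv1 (by rw [h, map_one]), (htrans w v).mpr (by rwa [Set.pair_comm] at hγv)⟩
    have hd1 : (deltaGraph G).Adj ⟨u, hu⟩ ⟨w, hw_mem⟩ := hadj1
    have hd2 : (deltaGraph G).Adj ⟨w, hw_mem⟩ ⟨v, hv⟩ := hadj2
    let p : (deltaGraph G).Walk ⟨u, hu⟩ ⟨v, hv⟩ :=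
      SimpleGraph.Walk.cons hd1 (SimpleGraph.Walk.cons hd2 SimpleGraph.Walk.nil)
    refine ⟨⟨p⟩, le_trans (SimpleGraph.dist_le p) ?_⟩
    simp [p]
  · -- two non-adjacent vertices
    by_cases hsq : ∃ u, u ∈ nonIso G ∧ u * u ≠ 1
    · obtain ⟨u, hu, huu⟩ := hsq
      have huinv : u⁻¹ ∈ nonIso G := by
        obtain ⟨β, hβ⟩ := (hmem u).mp hu
        refine (hmem u⁻¹).mpr ⟨β, ?_⟩
        rw [map_inv, closure_pair_inv]
        exact hβ
      refine ⟨⟨u, hu⟩, ⟨u⁻¹, huinv⟩, ?_, ?_⟩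
      · intro h
        have hval : u = u⁻¹ := Subtype.ext_iff.mp h
        have hmu : u * u⁻¹ = 1 := mul_inv_cancel u
        rw [← hval] at hmu
        exact huu hmu
      · intro hadj
        have hadj' : (genGraph G).Adj u u⁻¹ := hadj
        have htop : Subgroup.closure ({u, u⁻¹} : Set G) = ⊤ := hadj'.2.2.2
        rw [Set.pair_comm, closure_pair_inv, Set.pair_eq_singleton] at htop
        exact hnc ⟨u, htop⟩
    · exfalso
      push_neg at hsq
      have hx0y0 : x0 ≠ y0 := by
        rintro rfl
        rw [Set.pair_eq_singleton] at hgen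
        exact hnc ⟨x0, hgen⟩
      have hx01 : x0 ≠ 1 := by
        rintro rfl
        rw [closure_pair_eq_sup, Subgroup.zpowers_one_eq_bot, bot_sup_eq,
          Subgroup.zpowers_eq_closure] at hgen
        exact hnc ⟨y0, hgen⟩
      have hy01 : y0 ≠ 1 := by
        rintro rfl
        rw [closure_pair_eq_sup, Subgroup.zpowers_one_eq_bot, sup_bot_eq,
          Subgroup.zpowers_eq_closure] at hgen
        exact hnc ⟨x0, hgen⟩
      have hz1 : x0 * y0 ≠ 1 := by
        intro h
        have hinv : x0⁻¹ = y0 := inv_eq_of_mul_eq_one_right h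
        rw [← hinv, Set.pair_comm, closure_pair_inv, Set.pair_comm,
          Set.pair_eq_singleton] at hgen
        exact hnc ⟨x0, hgen⟩
      have hxyadj : (genGraph G).Adj x0 y0 := ⟨hx0y0, hx01, hy01, hgen⟩
      have hx0m : x0 ∈ nonIso G := ⟨y0, hxyadj⟩
      have hy0m : y0 ∈ nonIso G := ⟨x0, hxyadj.symm⟩
      have hgen2 : Subgroup.closure ({x0, x0 * y0} : Set G) = ⊤ := by
        apply le_antisymm le_top
        rw [← hgen, Subgroup.closure_le]
        rintro x (rfl | rfl)
        · exact Subgroup.subset_closure (Set.mem_insert _ _)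
        · have hx : x0 ∈ Subgroup.closure ({x0, x0 * x} : Set G) :=
            Subgroup.subset_closure (Set.mem_insert _ _)
          have hxy : x0 * x ∈ Subgroup.closure ({x0, x0 * x} : Set G) :=
            Subgroup.subset_closure (Set.mem_insert_of_mem _ rfl)
          have hm := Subgroup.mul_mem _ (Subgroup.inv_mem _ hx) hxy
          have hrw : x0⁻¹ * (x0 * x) = x := by group
          rwa [hrw] at hm
      have hzadj : (genGraph G).Adj x0 (x0 * y0) :=
        ⟨fun h => hy01 (left_eq_mul.mp h), hx01, hz1, hgen2⟩
      have hzm : x0 * y0 ∈ nonIso G := ⟨x0, hzadj.symm⟩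
      have hx2 : x0 * x0 = 1 := hsq x0 hx0m
      have hy2 : y0 * y0 = 1 := hsq y0 hy0m
      have hz2 : (x0 * y0) * (x0 * y0) = 1 := hsq (x0 * y0) hzm
      have hcomm0 : y0 * x0 = x0 * y0 := by
        have hxinv : x0⁻¹ = x0 := inv_eq_of_mul_eq_one_right hx2
        have hyinv : y0⁻¹ = y0 := inv_eq_of_mul_eq_one_right hy2
        have hzinv : (x0 * y0)⁻¹ = x0 * y0 := inv_eq_of_mul_eq_one_right hz2
        calc y0 * x0 = y0⁻¹ * x0⁻¹ := by rw [hxinv, hyinv]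
          _ = (x0 * y0)⁻¹ := (mul_inv_rev x0 y0).symm
          _ = x0 * y0 := hzinv
      have hGcomm : ∀ g h : G, g * h = h * g := by
        have hstep1 : ∀ g : G, g ∈ Subgroup.centralizer {x0, y0} := by
          intro g
          have hle : Subgroup.closure ({x0, y0} : Set G) ≤ Subgroup.centralizer {x0, y0} := by
            rw [Subgroup.closure_le]
            rintro w (rfl | rfl)
            · rw [SetLike.mem_coe, Subgroup.mem_centralizer_iff]
              rintro h (rfl | rfl)
              · rfl
              · exact hcomm0
            · rw [SetLike.mem_coe, Subgroup.mem_centralizer_iff]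
              rintro h (rfl | rfl)
              · exact hcomm0.symm
              · rfl
          exact hle (hgen ▸ Subgroup.mem_top g)
        intro g h
        have hx0g : x0 * g = g * x0 :=
          Subgroup.mem_centralizer_iff.mp (hstep1 g) x0 (Set.mem_insert _ _)
        have hy0g : y0 * g = g * y0 :=
          Subgroup.mem_centralizer_iff.mp (hstep1 g) y0 (Set.mem_insert_of_mem _ rfl)
        have hle : Subgroup.closure ({x0, y0} : Set G) ≤ Subgroup.centralizer {g} := by
          rw [Subgroup.closure_le]
          rintro w (rfl | rfl)
          · rw [SetLike.mem_coe, Subgroup.mem_centralizer_iff]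
            rintro k hk
            rw [Set.mem_singleton_iff] at hk
            subst hk
            exact hx0g.symm
          · rw [SetLike.mem_coe, Subgroup.mem_centralizer_iff]
            rintro k hk
            rw [Set.mem_singleton_iff] at hk
            subst hk
            exact hy0g.symm
        have hmemc := hle (hgen ▸ Subgroup.mem_top h)
        exact Subgroup.mem_centralizer_iff.mp hmemc g (Set.mem_singleton g)
      have hcommbot : commutator G = ⊥ := by
        have hle : commutator G ≤ ⊥ := by
          rw [commutator_def, Subgroup.commutator_le]
          intro g _ h _
          rw [Subgroup.mem_bot]
          exact commutatorElement_eq_one_iff_mul_comm.mpr (hGcomm g h)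
        exact le_bot_iff.mp hle
      have hπinj : Function.Injective π := by
        apply (injective_iff_map_eq_one π).mpr
        intro g hg
        have hker : g ∈ (Abelianization.of : G →* Abelianization G).ker := hg
        rw [ker_abelianization_of, hcommbot, Subgroup.mem_bot] at hker
        exact hker
      have hx2A : (π x0) * (π x0) = 1 := by rw [← map_mul, hx2, map_one]
      have hy2A : (π y0) * (π y0) = 1 := by rw [← map_mul, hy2, map_one]
      set φ : Multiplicative (ZMod 2 × ZMod 2) →* Abelianization G :=
        MonoidHom.mk' (fun p => (π x0) ^ (p.toAdd.1.val) * (π y0) ^ (p.toAdd.2.val)) (by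
          intro p q
          show (π x0) ^ ((p.toAdd.1 + q.toAdd.1).val) * (π y0) ^ ((p.toAdd.2 + q.toAdd.2).val)
            = _
          rw [ZMod.val_add, ZMod.val_add, pow_mod_two _ hx2A, pow_mod_two _ hy2A,
            pow_add, pow_add]
          exact mul_mul_mul_comm _ _ _ _) with hφ
      have hv0 : ((0 : ZMod 2)).val = 0 := rfl
      have hv1 : ((1 : ZMod 2)).val = 1 := rfl
      have hsurj : Function.Surjective φ := by
        have hr : (⊤ : Subgroup (Abelianization G)) ≤ φ.range := by
          rw [← (htrans x0 y0).mp hgen, Subgroup.closure_le]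
          rintro w (rfl | rfl)
          · exact ⟨Multiplicative.ofAdd (1, 0), by
              show (π x0) ^ ((1 : ZMod 2)).val * (π y0) ^ ((0 : ZMod 2)).val = π x0
              rw [hv0, hv1, pow_one, pow_zero, mul_one]⟩
          · exact ⟨Multiplicative.ofAdd (0, 1), by
              show (π x0) ^ ((0 : ZMod 2)).val * (π y0) ^ ((1 : ZMod 2)).val = π y0
              rw [hv0, hv1, pow_one, pow_zero, one_mul]⟩
        intro x
        exact hr (Subgroup.mem_top x)
      have hinj : Function.Injective φ := by
        apply (injective_iff_map_eq_one φ).mpr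
        intro p hp
        have hp' : (π x0) ^ (p.toAdd.1.val) * (π y0) ^ (p.toAdd.2.val) = 1 := hp
        have hcase : ∀ r : ZMod 2, r = 0 ∨ r = 1 := by decide
        rcases hcase p.toAdd.1 with ha | ha <;> rcases hcase p.toAdd.2 with hb | hb
        · have : p.toAdd = (0, 0) := Prod.ext ha hb
          exact Multiplicative.toAdd.injective this
        · exfalso
          rw [ha, hb, hv0, hv1, pow_zero, pow_one, one_mul] at hp'
          exact hy01 (hπinj (hp'.trans (map_one π).symm))
        · exfalso
          rw [ha, hb, hv0, hv1, pow_zero, pow_one, mul_one] at hp'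
          exact hx01 (hπinj (hp'.trans (map_one π).symm))
        · exfalso
          rw [ha, hb, hv1, pow_one, pow_one, ← map_mul] at hp'
          exact hz1 (hπinj (hp'.trans (map_one π).symm))
      exact hab2 ⟨(MulEquiv.ofBijective φ ⟨hinj, hsurj⟩).symm⟩
end
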